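/- The Searching AM implements the weak head strategy: for every term t, (1) every execution from the initial state (t, ε) ending in state s projects to a weak head derivation t →wh* ⌊s⌋ whose length equals the number of →rβ transitions in the execution; (2) conversely every weak head derivation t →wh* u is simulated by an execution from (t, ε) to some state decoding to u with matching number of →rβ transitions. -/
import Mathlib


/-- Lambda terms with named variables. -/
inductive Term : Type
  | var : ℕ → Term
  | lam : ℕ → Term → Term
  | app : Term → Term → Term
deriving DecidableEq

namespace Term

/-- Size: the number of constructors. -/
def size : Term → ℕ
  | var _ => 1
  | lam _ t => t.size + 1
  | app t s => t.size + s.size + 1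

/-- Substitution (stopping at matching binders). -/
def subst (x : ℕ) (u : Term) : Term → Term
  | var y => if y = x then u else var y
  | lam y t => if y = x then lam y t else lam y (subst x u t)
  | app t s => app (subst x u t) (subst x u s)

end Term

/-- Beta reduction: compatible closure of the root beta rule. -/
inductive Beta : Term → Term → Prop
  | beta (x : ℕ) (t u : Term) : Beta (.app (.lam x t) u) (Term.subst x u t)
  | appL {t t' : Term} (u : Term) : Beta t t' → Beta (.app t u) (.app t' u)
  | appR {u u' : Term} (t : Term) : Beta u u' → Beta (.app t u) (.app t u')
  | lam {t t' : Term} (x : ℕ) : Beta t t' → Beta (.lam x t) (.lam x t')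

/-- Weak head reduction. -/
inductive Wh : Term → Term → Prop
  | beta (x : ℕ) (t u : Term) : Wh (.app (.lam x t) u) (Term.subst x u t)
  | appL {t t' : Term} (u : Term) : Wh t t' → Wh (.app t u) (.app t' u)

/-- `StepN R n a b`: `a` reduces to `b` in exactly `n` `R`-steps. -/
inductive StepN {α : Type} (R : α → α → Prop) : ℕ → α → α → Prop
  | refl (a : α) : StepN R 0 a a
  | step {a b c : α} {n : ℕ} : R a b → StepN R n b c → StepN R (n + 1) a c

/-- States of the Searching Abstract Machine: a code and an argument stack. -/
abbrev SState : Type := Term × List Term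

/-- Decoding of Searching AM states. -/
def decode : Term → List Term → Term
  | t, [] => t
  | t, u :: π => decode (.app t u) π

/-- The overhead (searching) transition `→@l`. -/
inductive SApp : SState → SState → Prop
  | mk (t u : Term) (π : List Term) : SApp (.app t u, π) (t, u :: π)

/-- The beta transition `→rβ`. -/
inductive SBeta : SState → SState → Prop
  | mk (x : ℕ) (t u : Term) (π : List Term) :
      SBeta (.lam x t, u :: π) (Term.subst x u t, π)

/-- The transition relation of the Searching AM. -/
inductive SStep : SState → SState → Prop
  | appl {s s' : SState} : SApp s s' → SStep s s'
  | beta {s s' : SState} : SBeta s s' → SStep s s'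

/-- Executions of the Searching AM counting the number of `→rβ` transitions. -/
inductive SExec : SState → SState → ℕ → Prop
  | refl (s : SState) : SExec s s 0
  | appl {s s' s'' : SState} {n : ℕ} : SApp s s' → SExec s' s'' n → SExec s s'' n
  | beta {s s' s'' : SState} {n : ℕ} : SBeta s s' → SExec s' s'' n → SExec s s'' (n + 1)

lemma decode_wh {t t' : Term} (h : Wh t t') : ∀ π : List Term, Wh (decode t π) (decode t' π) := by
  intro π
  induction π generalizing t t' with
  | nil => exact h
  | cons u π ih => exact ih (Wh.appL u h)

lemma exec_proj {s0 s : SState} {n : ℕ} (h : SExec s0 s n) :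
    StepN Wh n (decode s0.1 s0.2) (decode s.1 s.2) := by
  induction h with
  | refl s => exact StepN.refl _
  | appl ha _ ih => cases ha with | mk t u π => exact ih
  | beta hb _ ih => cases hb with
    | mk x t u π => exact StepN.step (decode_wh (Wh.beta x t u) π) ih

lemma wh_lift {a b : Term} (h : Wh a b) :
    ∀ (π : List Term) (n : ℕ) (c : Term),
      (∃ s : SState, SExec (b, π) s n ∧ decode s.1 s.2 = c) →
      ∃ s : SState, SExec (a, π) s (n + 1) ∧ decode s.1 s.2 = c := by
  induction h with
  | beta x t u =>
      rintro π n c ⟨s, hs, hc⟩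
      exact ⟨s, SExec.appl (SApp.mk (Term.lam x t) u π) (SExec.beta (SBeta.mk x t u π) hs), hc⟩
  | @appL t t' u hw ih =>
      rintro π n c ⟨s, hs, hc⟩
      have : ∃ s' : SState, SExec (t', u :: π) s' n ∧ decode s'.1 s'.2 = c := by
        cases hs with
        | refl => exact ⟨(t', u :: π), SExec.refl _, hc⟩
        | appl ha htail => cases ha with | mk => exact ⟨s, htail, hc⟩
        | beta hb htail => cases hb
      obtain ⟨s', hs', hc'⟩ := ih (u :: π) n c this
      exact ⟨s', SExec.appl (SApp.mk t u π) hs', hc'⟩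

/-- the Searching AM implements the weak head strategy:
    executions project to derivations and derivations lift to executions,
    with matching numbers of beta transitions/steps. -/
theorem searching_am_implements_wh :
    (∀ (t : Term) (s : SState) (n : ℕ),
        SExec (t, []) s n → StepN Wh n t (decode s.1 s.2)) ∧
    (∀ (t u : Term) (n : ℕ),
        StepN Wh n t u → ∃ s : SState, SExec (t, []) s n ∧ decode s.1 s.2 = u) := by
  
  constructor
  · intro t s n h
    exact exec_proj h
  · intro t u n h
    induction h with
    | refl a => exact ⟨(a, []), SExec.refl _, rfl⟩
    | step hw _ ih => exact wh_lift hw [] _ _ ih
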